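/- Let F be a field, k ≥ 2, and work over the field F(λ) of rational functions. Let D(λ) = Σ_{i=0}^{k} D_i φ_i(λ) with D_i ∈ F^{m×m}, let A ∈ F^{n×n}, B ∈ F^{n×m}, C ∈ F^{m×n}, and set G(λ) := D(λ) + C(λI_n − A)^{−1}B ∈ F(λ)^{m×m}. Let w ∈ F^k and let L(λ) ∈ F[λ]^{km×km} be a pencil satisfying (Φ_k(λ)^T⊗I_m)·L(λ) = w^T ⊗ D(λ). Define Ĝ(λ) := L(λ) + (e_k⊗I_m)·C(λI_n−A)^{−1}B·(w^T⊗I_m) ∈ F(λ)^{km×km}, where e_k is the k-th canonical vector of F^k. Then (Φ_k(λ)^T⊗I_m)·Ĝ(λ) = w^T ⊗ G(λ). -/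

import Mathlib

/-!
Multiply the two summands of `Ĝ(λ)` separately. The ansatz equation handles `L(λ)`; for the
realization term, `(Φ_k(λ)ᵀ ⊗ I_m)(e_k ⊗ I_m) = φ_0(λ) I_m = I_m` since `e_k` picks out the last
entry `φ_0` of `Φ_k`, which leaves `C(λI_n − A)⁻¹B (wᵀ ⊗ I_m)`.
-/

open Matrix

/-- The column vector `Φ_k(λ) ⊗ I_m` as a `km × m` polynomial matrix. -/
noncomputable def phiKron {F : Type*} [Field F] (φ : ℕ → Polynomial F) (k m : ℕ) :
    Matrix (Fin k × Fin m) (Fin m) (Polynomial F) :=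
  Matrix.of fun p j => if p.2 = j then φ (k - 1 - (p.1 : ℕ)) else 0

/-- The matrix `v ⊗ I_m ∈ R^{km×m}` built from a vector `v ∈ R^k`. -/
def vKron {R : Type*} [Semiring R] (k m : ℕ) (v : Fin k → R) :
    Matrix (Fin k × Fin m) (Fin m) R :=
  Matrix.of fun p j => if p.2 = j then v p.1 else 0

/-- The matrix `(λ I_n − A)⁻¹` over the field of rational functions. -/
noncomputable def lamResolvent {F : Type*} [Field F] {n : ℕ} (A : Matrix (Fin n) (Fin n) F) :
    Matrix (Fin n) (Fin n) (RatFunc F) :=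
  (Matrix.diagonal (fun _ => (RatFunc.X : RatFunc F)) - A.map (algebraMap F (RatFunc F)))⁻¹

theorem phiKron_eq_vKron {F : Type*} [Field F] (φ : ℕ → Polynomial F) (k m : ℕ) :
    phiKron φ k m = vKron k m (fun i => φ (k - 1 - (i : ℕ))) :=
  rfl

theorem vKron_map {R S : Type*} [Semiring R] [Semiring S] (f : R →+* S) (k m : ℕ)
    (v : Fin k → R) : (vKron k m v).map f = vKron k m (fun i => f (v i)) := by
  ext p j
  simp only [vKron, map_apply, of_apply, apply_ite f, map_zero]

theorem vKron_transpose_mul_vKron {R : Type*} [CommSemiring R] (k m : ℕ) (u v : Fin k → R) :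
    (vKron k m u)ᵀ * vKron k m v = (u ⬝ᵥ v) • (1 : Matrix (Fin m) (Fin m) R) := by
  ext i j
  rw [mul_apply, Fintype.sum_prod_type, Matrix.smul_apply, one_apply, dotProduct]
  simp only [transpose_apply, vKron, of_apply, mul_ite, ite_mul, mul_zero, zero_mul,
    Finset.sum_ite_eq', Finset.mem_univ, if_true]
  rcases eq_or_ne i j with rfl | hij
  · simp
  · simp [hij, hij.symm]

theorem dotProduct_indicator_last {R : Type*} [NonAssocSemiring R] {k : ℕ} (hk : 0 < k)
    (u : Fin k → R) :
    u ⬝ᵥ (fun i : Fin k => if (i : ℕ) = k - 1 then (1 : R) else 0) = u ⟨k - 1, by omega⟩ := by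
  rw [dotProduct, Finset.sum_eq_single ⟨k - 1, by omega⟩]
  · simp
  · intro i _ hi
    simp [show (i : ℕ) ≠ k - 1 from fun h => hi (Fin.ext h)]
  · simp

theorem phiKron_map_transpose_mul_vKron_last {F S : Type*} [Field F] [CommSemiring S]
    (f : Polynomial F →+* S) {k : ℕ} (hk : 0 < k) (m : ℕ) (φ : ℕ → Polynomial F)
    (hφ0 : φ 0 = 1) :
    ((phiKron φ k m).map f)ᵀ * vKron k m (fun i : Fin k => if (i : ℕ) = k - 1 then (1 : S) else 0)
      = 1 := by
  rw [phiKron_eq_vKron, vKron_map, vKron_transpose_mul_vKron, dotProduct_indicator_last hk]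
  simp [hφ0]

theorem phiKron_mul_transferFunction_M2_general
    {F : Type*} [Field F] {m n k : ℕ} (hk : 2 ≤ k)
    (φ : ℕ → Polynomial F) (hφ0 : φ 0 = 1)
    (D : ℕ → Matrix (Fin m) (Fin m) F)
    (A : Matrix (Fin n) (Fin n) F) (B : Matrix (Fin n) (Fin m) F)
    (C : Matrix (Fin m) (Fin n) F)
    (G : Matrix (Fin m) (Fin m) (RatFunc F))
    (hG : G = (∑ i ∈ Finset.range (k + 1),
          (D i).map (fun a => φ i * Polynomial.C a)).map (algebraMap (Polynomial F) (RatFunc F))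
        + C.map (algebraMap F (RatFunc F)) * lamResolvent A * B.map (algebraMap F (RatFunc F)))
    (w : Fin k → F)
    (L : Matrix (Fin k × Fin m) (Fin k × Fin m) (Polynomial F))
    (hansatz : (phiKron φ k m)ᵀ * L
      = (∑ i ∈ Finset.range (k + 1), (D i).map (fun a => φ i * Polynomial.C a)) *
          (vKron k m (fun i => Polynomial.C (w i)))ᵀ)
    (Ghat : Matrix (Fin k × Fin m) (Fin k × Fin m) (RatFunc F))
    (hGhat : Ghat = L.map (algebraMap (Polynomial F) (RatFunc F))
      + vKron k m (fun i : Fin k => if (i : ℕ) = k - 1 then (1 : RatFunc F) else 0) *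
          (C.map (algebraMap F (RatFunc F)) * lamResolvent A *
            B.map (algebraMap F (RatFunc F))) *
          (vKron k m (fun i => algebraMap F (RatFunc F) (w i)))ᵀ) :
    ((phiKron φ k m).map (algebraMap (Polynomial F) (RatFunc F)))ᵀ * Ghat
      = G * (vKron k m (fun i => algebraMap F (RatFunc F) (w i)))ᵀ := by
  subst hG hGhat
  set f := algebraMap (Polynomial F) (RatFunc F)
  have hL : ((phiKron φ k m).map f)ᵀ * L.map f
      = (∑ i ∈ Finset.range (k + 1), (D i).map (fun a => φ i * Polynomial.C a)).map f
          * (vKron k m (fun i => algebraMap F (RatFunc F) (w i)))ᵀ := by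
    have := congrArg (Matrix.map · f) hansatz
    simp only [Matrix.map_mul, Matrix.transpose_map, vKron_map] at this
    simpa only [f, RatFunc.algebraMap_C, RatFunc.algebraMap_eq_C] using this
  rw [Matrix.mul_add, ← Matrix.mul_assoc, ← Matrix.mul_assoc,
    phiKron_map_transpose_mul_vKron_last f (by omega) m φ hφ0, Matrix.one_mul, hL, Matrix.add_mul]

/-- If `L(λ)` is a pencil with `(Φ_k(λ)ᵀ⊗I_m)L(λ) = wᵀ ⊗ D(λ)` and
`Ĝ(λ) = L(λ) + (e_k⊗I_m)C(λI_n−A)⁻¹B(wᵀ⊗I_m)` is the transfer function of the associated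
`𝕄₂`-strong linearization of `G(λ) = D(λ) + C(λI_n−A)⁻¹B`, then
`(Φ_k(λ)ᵀ⊗I_m)Ĝ(λ) = wᵀ ⊗ G(λ)`. -/
theorem phiKron_mul_transferFunction_M2
    {F : Type*} [Field F] {m n k : ℕ} (hk : 2 ≤ k)
    (α β γ : ℕ → F) (hα : ∀ j, α j ≠ 0)
    (φ : ℕ → Polynomial F) (hφ0 : φ 0 = 1)
    (hrec : ∀ j : ℕ, Polynomial.C (α j) * φ (j + 1)
      = (Polynomial.X - Polynomial.C (β j)) * φ j
        - Polynomial.C (γ j) * (if j = 0 then 0 else φ (j - 1)))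
    (D : ℕ → Matrix (Fin m) (Fin m) F)
    (A : Matrix (Fin n) (Fin n) F) (B : Matrix (Fin n) (Fin m) F)
    (C : Matrix (Fin m) (Fin n) F)
    (G : Matrix (Fin m) (Fin m) (RatFunc F))
    (hG : G = (∑ i ∈ Finset.range (k + 1),
          (D i).map (fun a => φ i * Polynomial.C a)).map (algebraMap (Polynomial F) (RatFunc F))
        + C.map (algebraMap F (RatFunc F)) * lamResolvent A * B.map (algebraMap F (RatFunc F)))
    (w : Fin k → F)
    (L : Matrix (Fin k × Fin m) (Fin k × Fin m) (Polynomial F))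
    (hLpencil : ∀ p q, (L p q).natDegree ≤ 1)
    (hansatz : (phiKron φ k m)ᵀ * L
      = (∑ i ∈ Finset.range (k + 1), (D i).map (fun a => φ i * Polynomial.C a)) *
          (vKron k m (fun i => Polynomial.C (w i)))ᵀ)
    (Ghat : Matrix (Fin k × Fin m) (Fin k × Fin m) (RatFunc F))
    (hGhat : Ghat = L.map (algebraMap (Polynomial F) (RatFunc F))
      + vKron k m (fun i : Fin k => if (i : ℕ) = k - 1 then (1 : RatFunc F) else 0) *
          (C.map (algebraMap F (RatFunc F)) * lamResolvent A *
            B.map (algebraMap F (RatFunc F))) *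
          (vKron k m (fun i => algebraMap F (RatFunc F) (w i)))ᵀ) :
    ((phiKron φ k m).map (algebraMap (Polynomial F) (RatFunc F)))ᵀ * Ghat
      = G * (vKron k m (fun i => algebraMap F (RatFunc F) (w i)))ᵀ :=
  phiKron_mul_transferFunction_M2_general hk φ hφ0 D A B C G hG w L hansatz Ghat hGhat
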